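/- Let a ∈ (0,1], t ∈ R, and let X, Y be n×n Hermitian matrices with a·1 ≤ X ≤ 1 and a·1 ≤ Y ≤ 1. Then ∥X^{±1/2 ± it} − Y^{±1/2 ± it}∥ ≤ (1 + 2|t|) √n · a^{−3/2} · ∥X − Y∥, where ∥·∥ is the operator norm and the matrix power is defined by functional calculus. -/

import Mathlib

open Matrix MeasureTheory
open scoped ComplexOrder

noncomputable section

variable {n : Type*} [Fintype n] [DecidableEq n]

/-- Matrix logarithm via spectral decomposition (junk value 0 for non-Hermitian input). -/
def matLog (M : Matrix n n ℂ) : Matrix n n ℂ :=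
  if h : M.IsHermitian then
    (h.eigenvectorUnitary : Matrix n n ℂ) *
      Matrix.diagonal (fun i => (Real.log (h.eigenvalues i) : ℂ)) *
      (star h.eigenvectorUnitary : Matrix n n ℂ)
  else 0

/-- Complex matrix power via spectral decomposition (junk value 0 for non-Hermitian input). -/
def matCPow (M : Matrix n n ℂ) (z : ℂ) : Matrix n n ℂ :=
  if h : M.IsHermitian then
    (h.eigenvectorUnitary : Matrix n n ℂ) *
      Matrix.diagonal (fun i => ((h.eigenvalues i : ℂ) ^ z)) *
      (star h.eigenvectorUnitary : Matrix n n ℂ)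
  else 0

/-- von Neumann entropy `S(ρ) = -Tr[ρ log ρ]`. -/
def vnEntropy (M : Matrix n n ℂ) : ℝ := -(Matrix.trace (M * matLog M)).re

/-- Quantum relative entropy `D(ρ‖σ) = Tr[ρ (log ρ - log σ)]`. -/
def relEntropy (ρ σ : Matrix n n ℂ) : ℝ := (Matrix.trace (ρ * (matLog ρ - matLog σ))).re

/-- Operator norm of a matrix. -/
def opNorm (M : Matrix n n ℂ) : ℝ := ‖Matrix.toEuclideanCLM (𝕜 := ℂ) M‖

/-- Old Mathlib `Matrix.PosSemidef.sqrt` (removed upstream), restated with its old definition. -/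
def Matrix.PosSemidef.sqrt {M : Matrix n n ℂ} (hA : M.PosSemidef) : Matrix n n ℂ :=
  (hA.1.eigenvectorUnitary : Matrix n n ℂ) *
    Matrix.diagonal (fun i => ((Real.sqrt (hA.1.eigenvalues i) : ℝ) : ℂ)) *
    (star hA.1.eigenvectorUnitary : Matrix n n ℂ)

/-- Trace norm `‖A‖₁ = Tr √(AᴴA)`. -/
def traceNorm (A : Matrix n n ℂ) : ℝ :=
  ((Matrix.posSemidef_conjTranspose_mul_self A).sqrt.trace).re

/-- Positive semidefinite square root (junk value 0 otherwise). -/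
def sqrtPSD (M : Matrix n n ℂ) : Matrix n n ℂ :=
  open scoped Classical in
  if h : M.PosSemidef then h.sqrt else 0

/-- Fidelity `F(ρ,σ) = ‖√ρ √σ‖₁`. -/
def fidelity (ρ σ : Matrix n n ℂ) : ℝ := traceNorm (sqrtPSD ρ * sqrtPSD σ)

/-- Binary entropy (natural logarithm). -/
def binEnt (p : ℝ) : ℝ := -(p * Real.log p) - (1 - p) * Real.log (1 - p)

section ptrace
variable {α β : Type*} [Fintype α] [Fintype β]

/-- Partial trace over the first tensor factor. -/
def ptraceFst (M : Matrix (α × β) (α × β) ℂ) : Matrix β β ℂ :=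
  fun i j => ∑ a : α, M (a, i) (a, j)

/-- Partial trace over the second tensor factor. -/
def ptraceSnd (M : Matrix (α × β) (α × β) ℂ) : Matrix α α ℂ :=
  fun i j => ∑ b : β, M (i, b) (j, b)

end ptrace

/-! In eigenbases `X = U diag(λ) U*`, `Y = V diag(μ) V*`, the matrix `U* (f(X) - f(Y)) V` has
entries `(f λᵢ - f μⱼ) (U*V)ᵢⱼ`, while `U* (X - Y) V` has entries `(λᵢ - μⱼ) (U*V)ᵢⱼ`. So a
`K`-Lipschitz `f` on the spectra gives an entrywise domination, which passes to Frobenius norms and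
costs a factor `√n` on the way back to operator norms. For `f x = x ^ z` on `[a, ∞)` with
`Re z ≤ 1`, the mean value theorem gives `K = |z| a ^ (Re z - 1)`. -/

open scoped Matrix.Norms.L2Operator

namespace Matrix

variable {𝕜 : Type*} [RCLike 𝕜] {m : Type*} [Fintype m]

lemma l2_opNorm_sq_le_sum_norm_sq (A : Matrix m n 𝕜) :
    ‖A‖ ^ 2 ≤ ∑ i, ∑ j, ‖A i j‖ ^ 2 := by
  set S := ∑ i, ∑ j, ‖A i j‖ ^ 2
  suffices ‖A‖ ≤ √S from (sq_le_sq₀ (norm_nonneg A) (Real.sqrt_nonneg S)).2 this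
    |>.trans_eq (Real.sq_sqrt (by positivity))
  rw [l2_opNorm_def]
  refine ContinuousLinearMap.opNorm_le_bound _ (Real.sqrt_nonneg S) fun x => ?_
  rw [← sq_le_sq₀ (norm_nonneg _) (by positivity), mul_pow, Real.sq_sqrt (by positivity),
    EuclideanSpace.norm_sq_eq, EuclideanSpace.norm_sq_eq, Finset.sum_mul]
  refine Finset.sum_le_sum fun i _ => ?_
  calc ‖(A *ᵥ x.ofLp) i‖ ^ 2 ≤ (∑ j, ‖A i j‖ * ‖x j‖) ^ 2 := by
        gcongr
        exact (norm_sum_le _ _).trans_eq (by simp [norm_mul])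
    _ ≤ (∑ j, ‖A i j‖ ^ 2) * ∑ j, ‖x j‖ ^ 2 := Finset.sum_mul_sq_le_sq_mul_sq _ _ _

lemma sum_norm_sq_le_card_mul_l2_opNorm_sq (A : Matrix m n 𝕜) :
    ∑ i, ∑ j, ‖A i j‖ ^ 2 ≤ Fintype.card n * ‖A‖ ^ 2 := by
  rw [Finset.sum_comm, ← nsmul_eq_mul, ← Finset.card_univ, ← Finset.sum_const]
  refine Finset.sum_le_sum fun j _ => ?_
  have hcol := A.l2_opNorm_mulVec (EuclideanSpace.single j 1)
  rw [PiLp.norm_single, norm_one, mul_one] at hcol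
  calc ∑ i, ‖A i j‖ ^ 2
      = ‖(EuclideanSpace.equiv m 𝕜).symm (A *ᵥ EuclideanSpace.single j 1)‖ ^ 2 := by
        simp [EuclideanSpace.norm_sq_eq]
    _ ≤ ‖A‖ ^ 2 := by gcongr

lemma l2_opNorm_le_of_norm_apply_le {A B : Matrix m n 𝕜} {c : ℝ} (hc : 0 ≤ c)
    (h : ∀ i j, ‖A i j‖ ≤ c * ‖B i j‖) : ‖A‖ ≤ c * √(Fintype.card n) * ‖B‖ := by
  refine le_of_sq_le_sq ?_ (by positivity)
  calc ‖A‖ ^ 2 ≤ ∑ i, ∑ j, ‖A i j‖ ^ 2 := A.l2_opNorm_sq_le_sum_norm_sq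
    _ ≤ ∑ i, ∑ j, c ^ 2 * ‖B i j‖ ^ 2 := by
        gcongr with i _ j _
        simpa [mul_pow] using pow_le_pow_left₀ (norm_nonneg _) (h i j) 2
    _ ≤ c ^ 2 * (Fintype.card n * ‖B‖ ^ 2) := by
        simp only [← Finset.mul_sum]
        gcongr
        exact B.sum_norm_sq_le_card_mul_l2_opNorm_sq
    _ = (c * √(Fintype.card n) * ‖B‖) ^ 2 := by
        rw [mul_pow, mul_pow, Real.sq_sqrt (Nat.cast_nonneg _)]; ring

namespace IsHermitian

variable {A B : Matrix n n 𝕜} (hA : A.IsHermitian) (hB : B.IsHermitian)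

lemma le_eigenvalues {a : ℝ} (h : (A - (a : 𝕜) • 1).PosSemidef) (i : n) :
    a ≤ hA.eigenvalues i := by
  set v := hA.eigenvectorBasis i
  have hv : star ⇑v ⬝ᵥ ⇑v = 1 := by
    rw [dotProduct_comm, ← EuclideanSpace.inner_eq_star_dotProduct, inner_self_eq_norm_sq_to_K,
      hA.eigenvectorBasis.orthonormal.1 i]
    simp
  have hquad : star ⇑v ⬝ᵥ ((A - (a : 𝕜) • 1) *ᵥ ⇑v) = ((hA.eigenvalues i - a : ℝ) : 𝕜) := by
    rw [sub_mulVec, hA.mulVec_eigenvectorBasis, smul_mulVec, one_mulVec, dotProduct_sub,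
      dotProduct_smul, dotProduct_smul, hv, RCLike.real_smul_eq_coe_mul]
    simp
  have := h.dotProduct_mulVec_nonneg ⇑v
  rw [hquad, RCLike.ofReal_nonneg] at this
  linarith

/-- `f(A)` for a function `f : ℝ → 𝕜` that need not be real-valued, so that Mathlib's `cfc`
for self-adjoint elements does not apply. -/
def applyFun (f : ℝ → 𝕜) : Matrix n n 𝕜 :=
  (hA.eigenvectorUnitary : Matrix n n 𝕜) * diagonal (fun i => f (hA.eigenvalues i)) *
    (star hA.eigenvectorUnitary : Matrix n n 𝕜)

lemma applyFun_ofReal : hA.applyFun (fun x => (x : 𝕜)) = A := by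
  conv_rhs => rw [hA.spectral_theorem, Unitary.conjStarAlgAut_apply]
  rfl

lemma star_mul_applyFun_sub_applyFun_mul_apply (f g : ℝ → 𝕜) (i j : n) :
    ((star hA.eigenvectorUnitary : Matrix n n 𝕜) * (hA.applyFun f - hB.applyFun g) *
        (hB.eigenvectorUnitary : Matrix n n 𝕜)) i j =
      (f (hA.eigenvalues i) - g (hB.eigenvalues j)) *
        ((star hA.eigenvectorUnitary : Matrix n n 𝕜) * hB.eigenvectorUnitary) i j := by
  have hU := Unitary.coe_star_mul_self hA.eigenvectorUnitary
  have hV := Unitary.coe_star_mul_self hB.eigenvectorUnitary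
  have hconj : (star hA.eigenvectorUnitary : Matrix n n 𝕜) * (hA.applyFun f - hB.applyFun g) *
      (hB.eigenvectorUnitary : Matrix n n 𝕜) =
      diagonal (fun i => f (hA.eigenvalues i)) *
          ((star hA.eigenvectorUnitary : Matrix n n 𝕜) * hB.eigenvectorUnitary) -
        ((star hA.eigenvectorUnitary : Matrix n n 𝕜) * hB.eigenvectorUnitary) *
          diagonal (fun j => g (hB.eigenvalues j)) := by
    simp only [applyFun, Matrix.mul_sub, Matrix.sub_mul, ← Matrix.mul_assoc, hU, Matrix.one_mul]
    simp only [Matrix.mul_assoc, hV, Matrix.mul_one]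
  rw [hconj, sub_apply, diagonal_mul, mul_diagonal]
  ring

theorem norm_applyFun_sub_applyFun_le {f : ℝ → 𝕜} {s : Set ℝ} {K : ℝ} (hK : 0 ≤ K)
    (hf : ∀ x ∈ s, ∀ y ∈ s, ‖f x - f y‖ ≤ K * |x - y|)
    (hAs : ∀ i, hA.eigenvalues i ∈ s) (hBs : ∀ i, hB.eigenvalues i ∈ s) :
    ‖hA.applyFun f - hB.applyFun f‖ ≤ K * √(Fintype.card n) * ‖A - B‖ := by
  set U := hA.eigenvectorUnitary
  set V := hB.eigenvectorUnitary
  have hconj (M : Matrix n n 𝕜) : ‖(star U : Matrix n n 𝕜) * M * V‖ = ‖M‖ := by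
    rw [CStarRing.norm_mul_coe_unitary, ← Unitary.coe_star, CStarRing.norm_coe_unitary_mul]
  rw [← hconj, ← hconj (A - B)]
  refine l2_opNorm_le_of_norm_apply_le hK fun i j => ?_
  conv_rhs => rw [← hA.applyFun_ofReal, ← hB.applyFun_ofReal]
  rw [star_mul_applyFun_sub_applyFun_mul_apply, star_mul_applyFun_sub_applyFun_mul_apply,
    norm_mul, norm_mul, ← mul_assoc, ← RCLike.ofReal_sub, RCLike.norm_ofReal]
  gcongr
  exact hf _ (hAs i) _ (hBs j)

end IsHermitian

end Matrix

lemma opNorm_eq_l2_opNorm (A : Matrix n n ℂ) : opNorm A = ‖A‖ := rfl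

lemma matCPow_eq_applyFun {A : Matrix n n ℂ} (hA : A.IsHermitian) (z : ℂ) :
    matCPow A z = hA.applyFun (fun x => (x : ℂ) ^ z) := by
  rw [matCPow, dif_pos hA]
  rfl

namespace Complex

lemma norm_ofReal_cpow_sub_ofReal_cpow_le {a : ℝ} (ha : 0 < a) {z : ℂ} (hz : z.re ≤ 1)
    {x y : ℝ} (hx : a ≤ x) (hy : a ≤ y) :
    ‖(x : ℂ) ^ z - (y : ℂ) ^ z‖ ≤ ‖z‖ * a ^ (z.re - 1) * |x - y| := by
  rcases eq_or_ne z 0 with rfl | hz0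
  · simp
  have hderiv : ∀ w ∈ Set.Ici a,
      HasDerivWithinAt (fun w : ℝ => (w : ℂ) ^ z) (z * (w : ℂ) ^ (z - 1)) (Set.Ici a) w :=
    fun w hw => (hasDerivAt_ofReal_cpow_const (ha.trans_le hw).ne' hz0).hasDerivWithinAt
  have hbound : ∀ w ∈ Set.Ici a, ‖z * (w : ℂ) ^ (z - 1)‖ ≤ ‖z‖ * a ^ (z.re - 1) := by
    intro w hw
    rw [norm_mul, norm_cpow_eq_rpow_re_of_pos (ha.trans_le hw), sub_re, one_re]
    exact mul_le_mul_of_nonneg_left (Real.rpow_le_rpow_of_nonpos ha hw (by linarith))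
      (norm_nonneg z)
  simpa [Real.norm_eq_abs] using
    (convex_Ici a).norm_image_sub_le_of_norm_hasDerivWithin_le hderiv hbound hy hx

end Complex

theorem stmt10_general (n : ℕ) (a t : ℝ) (ha : 0 < a) (ha1 : a ≤ 1)
    (X Y : Matrix (Fin n) (Fin n) ℂ) (hX : X.IsHermitian) (hY : Y.IsHermitian)
    (hXa : (X - ((a : ℝ) : ℂ) • 1).PosSemidef)
    (hYa : (Y - ((a : ℝ) : ℂ) • 1).PosSemidef) :
    ∀ s : ℝ, (s = 1 / 2 ∨ s = -(1 / 2)) → ∀ u : ℝ, (u = t ∨ u = -t) →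
      opNorm (matCPow X ((s : ℂ) + (u : ℂ) * Complex.I) -
          matCPow Y ((s : ℂ) + (u : ℂ) * Complex.I)) ≤
        (1 + 2 * |t|) * Real.sqrt n * a ^ (-(3 : ℝ) / 2) * opNorm (X - Y) := by
  intro s hs u hu
  set z : ℂ := (s : ℂ) + (u : ℂ) * Complex.I
  have hzre : z.re = s := by simp [z]
  have hs_abs : |s| = 1 / 2 := by rcases hs with rfl | rfl <;> norm_num
  have hu_abs : |u| = |t| := by rcases hu with rfl | rfl <;> simp
  have hzre_le : z.re ≤ 1 := by linarith [le_abs_self s]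
  have hz : ‖z‖ ≤ 1 + 2 * |t| :=
    calc ‖z‖ ≤ |s| + |u| := (norm_add_le _ _).trans_eq (by simp [Complex.norm_real])
      _ ≤ 1 + 2 * |t| := by linarith [abs_nonneg t]
  have hpow : a ^ (z.re - 1) ≤ a ^ (-(3 : ℝ) / 2) :=
    Real.rpow_le_rpow_of_exponent_ge ha ha1 (by rcases hs with rfl | rfl <;> norm_num [hzre])
  calc opNorm (matCPow X z - matCPow Y z)
      = ‖hX.applyFun (fun x => (x : ℂ) ^ z) - hY.applyFun (fun x => (x : ℂ) ^ z)‖ := by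
        rw [opNorm_eq_l2_opNorm, matCPow_eq_applyFun hX, matCPow_eq_applyFun hY]
    _ ≤ ‖z‖ * a ^ (z.re - 1) * √(Fintype.card (Fin n)) * ‖X - Y‖ :=
        hX.norm_applyFun_sub_applyFun_le hY (by positivity)
          (fun _ hx _ hy => Complex.norm_ofReal_cpow_sub_ofReal_cpow_le ha hzre_le hx hy)
          (hX.le_eigenvalues hXa) (hY.le_eigenvalues hYa)
    _ ≤ (1 + 2 * |t|) * a ^ (-(3 : ℝ) / 2) * √(Fintype.card (Fin n)) * ‖X - Y‖ := by gcongr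
    _ = (1 + 2 * |t|) * Real.sqrt n * a ^ (-(3 : ℝ) / 2) * opNorm (X - Y) := by
        rw [opNorm_eq_l2_opNorm, Fintype.card_fin]; ring

/-- Lipschitz-type continuity of `X ↦ X^{±1/2 ± it}` on `a·1 ≤ X ≤ 1`. -/
theorem stmt10 (n : ℕ) (a t : ℝ) (ha : 0 < a) (ha1 : a ≤ 1)
    (X Y : Matrix (Fin n) (Fin n) ℂ) (hX : X.IsHermitian) (hY : Y.IsHermitian)
    (hXa : (X - ((a : ℝ) : ℂ) • 1).PosSemidef) (hX1 : ((1 : Matrix (Fin n) (Fin n) ℂ) - X).PosSemidef)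
    (hYa : (Y - ((a : ℝ) : ℂ) • 1).PosSemidef) (hY1 : ((1 : Matrix (Fin n) (Fin n) ℂ) - Y).PosSemidef) :
    ∀ s : ℝ, (s = 1 / 2 ∨ s = -(1 / 2)) → ∀ u : ℝ, (u = t ∨ u = -t) →
      opNorm (matCPow X ((s : ℂ) + (u : ℂ) * Complex.I) -
          matCPow Y ((s : ℂ) + (u : ℂ) * Complex.I)) ≤
        (1 + 2 * |t|) * Real.sqrt n * a ^ (-(3 : ℝ) / 2) * opNorm (X - Y) :=
  stmt10_general n a t ha ha1 X Y hX hY hXa hYa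

end
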